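/- Soundness of the approximate extended semantics: let P be a Γ-extended program with P:[] →* e:ρ in the extended graph-generating environment semantics. If e:ρ → e₀:ρ₀, G then e → e₀, G in the approximate extended semantics; and if e:ρ ⇓ e₀:ρ₀, G then e ⇓ e₀, G in the approximate extended semantics. -/

import Mathlib

/- Pure untyped λ-expressions. -/
inductive Exp : Type
  | var : String → Exp
  | app : Exp → Exp → Exp
  | lam : String → Exp → Exp
deriving DecidableEq

namespace Exp
/-- Free variables of a pure λ-expression. -/
def fv : Exp → Finset String
  | var x => {x}
  | app e1 e2 => fv e1 ∪ fv e2
  | lam x e => fv e \ {x}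
end Exp

/- Γ-extended λ-expressions: variables, nonterminals, applications and
abstractions. -/
inductive ExpE : Type
  | var : String → ExpE
  | app : ExpE → ExpE → ExpE
  | lam : String → ExpE → ExpE
  | nt : String → ExpE
deriving DecidableEq

/-- A λ-regular grammar `Γ = (N, Π)`: a finite set of nonterminals and a
finite set of productions `A ::= e`; we assume (as in the paper) that no
production has the form `A ::= A'` with `A'` a nonterminal. -/
structure Grammar where
  N : Set String
  prods : Set (String × ExpE)
  finN : N.Finite
  finProds : prods.Finite
  prods_mem : ∀ p ∈ prods, p.1 ∈ N
  no_nt_prod : ∀ p ∈ prods, ∀ A : String, p.2 ≠ ExpE.nt A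

/-- The derivation relation `e ⇒*_Γ t`, relating Γ-extended expressions to the
pure λ-expressions obtained by replacing every nonterminal occurrence
(independently) by a λ-expression it derives via the productions. -/
inductive Deriv (Γ : Grammar) : ExpE → Exp → Prop
  | var (x : String) : Deriv Γ (ExpE.var x) (Exp.var x)
  | app {a1 a2 : ExpE} {t1 t2 : Exp} :
      Deriv Γ a1 t1 → Deriv Γ a2 t2 → Deriv Γ (ExpE.app a1 a2) (Exp.app t1 t2)
  | lam {x : String} {a : ExpE} {t : Exp} :
      Deriv Γ a t → Deriv Γ (ExpE.lam x a) (Exp.lam x t)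
  | nt {A : String} {e : ExpE} {t : Exp} :
      (A, e) ∈ Γ.prods → Deriv Γ e t → Deriv Γ (ExpE.nt A) t

/-- Free variables of a Γ-extended expression:
`fv(e) = { x | ∃t, e ⇒*_Γ t and x ∈ fv(t) }`. -/
def fvE (Γ : Grammar) (e : ExpE) : Set String :=
  {x | ∃ t, Deriv Γ e t ∧ x ∈ Exp.fv t}
/- Values, environments and states of the Γ-extended environment-based
semantics. -/
inductive ValE : Type
  | clos : String → ExpE → (String → Option ValE) → ValE

abbrev EnvE := String → Option ValE
abbrev StateE := ExpE × EnvE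

/-- An extended value `λx.e:ρ` viewed as an extended state. -/
def ValE.toState : ValE → StateE
  | .clos x e ρ => (ExpE.lam x e, ρ)

/-- The extended-λ-expression component of an extended value. -/
def ValE.toExp : ValE → ExpE
  | .clos x e _ => ExpE.lam x e

def EnvE.update (ρ : EnvE) (x : String) (v : ValE) : EnvE :=
  fun y => if y = x then some v else ρ y

def EnvE.empty : EnvE := fun _ => none
/-- Arc labels: `=` (eq) and `↓` (dec). -/
inductive Lab : Type
  | eq : Lab
  | dec : Lab
deriving DecidableEq

/-- Name paths; here the nodes of generated size-change graphs are `ε = []`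
or single variables `[y]`. -/
abbrev NP := List String
abbrev Arc := NP × Lab × NP
abbrev ArcSet := Set Arc

/-- `id= = {ε =→ ε} ∪ {y =→ y | y ∈ s}`. -/
def idEqS (s : Set String) : ArcSet :=
  {a | a = ([], Lab.eq, []) ∨ ∃ y ∈ s, a = ([y], Lab.eq, [y])}

/-- `id↓ = {ε ↓→ ε} ∪ {y =→ y | y ∈ s}`. -/
def idDecS (s : Set String) : ArcSet :=
  {a | a = ([], Lab.dec, []) ∨ ∃ y ∈ s, a = ([y], Lab.eq, [y])}

/-- The graph `{x =→ ε} ∪ {x ↓→ y | y ∈ s}` of the variable rule. -/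
def varGraphS (x : String) (s : Set String) : ArcSet :=
  {a | a = ([x], Lab.eq, []) ∨ ∃ y ∈ s, a = ([x], Lab.dec, [y])}

/-- `G₁^{-ε/λx.e₀}`: keep arcs between variables, replace `ε r→ z` (`z` a
variable) by `ε ↓→ z`, and, when `x ∉ fv(e₀)`, additionally replace each
arc `p r→ ε` by `p ↓→ ε`.  (`fve0` is `fv(e₀)`.) -/
def GminusS (x : String) (fve0 : Set String) (G1 : ArcSet) : ArcSet :=
  {a | (∃ (y : String) (r : Lab) (z : String), a = ([y], r, [z]) ∧ ([y], r, [z]) ∈ G1) ∨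
       (∃ z : String, a = (([] : NP), Lab.dec, [z]) ∧ ∃ r, (([] : NP), r, [z]) ∈ G1) ∨
       (x ∉ fve0 ∧ ∃ p : NP, a = (p, Lab.dec, ([] : NP)) ∧ ∃ r, (p, r, ([] : NP)) ∈ G1)}

/-- `G₂^{ε↦x}`: `y r→ x` for each `y r→ ε ∈ G₂`, and `ε ↓→ x` for each
`ε r→ ε ∈ G₂`. -/
def GepsS (x : String) (G2 : ArcSet) : ArcSet :=
  {a | (∃ (y : String) (r : Lab), a = ([y], r, [x]) ∧ ([y], r, ([] : NP)) ∈ G2) ∨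
       (a = (([] : NP), Lab.dec, [x]) ∧ ∃ r, (([] : NP), r, ([] : NP)) ∈ G2)}

/-- `∪_{e₀}`: union restricted to arcs whose target is in `fv(e₀) ∪ {ε}`. -/
def unionRS (fve0 : Set String) (A B : ArcSet) : ArcSet :=
  {a | a ∈ A ∪ B ∧ (a.2.2 = ([] : NP) ∨ ∃ y ∈ fve0, a.2.2 = [y])}

/-- The label set `R(x,z)` used in graph composition. -/
def labelsA (G1 G2 : ArcSet) (x z : NP) : Set Lab :=
  {r | ∃ y s, ((x, r, y) ∈ G1 ∧ (y, s, z) ∈ G2) ∨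
              ((x, s, y) ∈ G1 ∧ (y, r, z) ∈ G2)}

/-- Composition `G₁;G₂` of size-change graphs (as arc sets): `x ↓→ z` whenever
`↓ ∈ R(x,z)`, and `x =→ z` whenever `R(x,z) = {=}`. -/
def compA (G1 G2 : ArcSet) : ArcSet :=
  {a | (∃ x z, a = (x, Lab.dec, z) ∧ Lab.dec ∈ labelsA G1 G2 x z) ∨
       (∃ x z, a = (x, Lab.eq, z) ∧ labelsA G1 G2 x z = {Lab.eq})}
/- The extended graph-generating environment semantics (on Γ-extended
expressions), with the (GramG) rule `A:ρ →n e:ρ` for productions `A ::= e`,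
and the (ResultG) rule composing graphs along `→c` and `→n` calls. -/
inductive CallXn (Γ : Grammar) : StateE → StateE → ArcSet → Prop
  | gram {A : String} {e : ExpE} (ρ : EnvE) :
      (A, e) ∈ Γ.prods → CallXn Γ (ExpE.nt A, ρ) (e, ρ) (idEqS (fvE Γ e))

mutual
  inductive EvalX (Γ : Grammar) : StateE → ValE → ArcSet → Prop
    | value (x : String) (e : ExpE) (ρ : EnvE) :
        EvalX Γ (ExpE.lam x e, ρ) (ValE.clos x e ρ) (idEqS (fvE Γ (ExpE.lam x e)))
    | var {ρ : EnvE} {x : String} {v : ValE} :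
        ρ x = some v → EvalX Γ (ExpE.var x, ρ) v (varGraphS x (fvE Γ v.toExp))
    | resultC {s s' : StateE} {v : ValE} {G' G : ArcSet} :
        CallXc Γ s s' G' → EvalX Γ s' v G → EvalX Γ s v (compA G' G)
    | resultN {s s' : StateE} {v : ValE} {G' G : ArcSet} :
        CallXn Γ s s' G' → EvalX Γ s' v G → EvalX Γ s v (compA G' G)
  inductive CallXc (Γ : Grammar) : StateE → StateE → ArcSet → Prop
    | call {e1 e2 : ExpE} {ρ ρ0 : EnvE} {x : String} {e0 : ExpE} {v2 : ValE}
        {G1 G2 : ArcSet} :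
        EvalX Γ (e1, ρ) (ValE.clos x e0 ρ0) G1 → EvalX Γ (e2, ρ) v2 G2 →
        CallXc Γ (ExpE.app e1 e2, ρ) (e0, EnvE.update ρ0 x v2)
          (unionRS (fvE Γ e0) (GminusS x (fvE Γ e0) G1) (GepsS x G2))
end

inductive CallXr (Γ : Grammar) : StateE → StateE → ArcSet → Prop
  | oper (e1 e2 : ExpE) (ρ : EnvE) :
      CallXr Γ (ExpE.app e1 e2, ρ) (e1, ρ) (idDecS (fvE Γ e1))

inductive CallXd (Γ : Grammar) : StateE → StateE → ArcSet → Prop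
  | opnd {e1 : ExpE} {ρ : EnvE} {v1 : ValE} {G1 : ArcSet} (e2 : ExpE) :
      EvalX Γ (e1, ρ) v1 G1 → CallXd Γ (ExpE.app e1 e2, ρ) (e2, ρ) (idDecS (fvE Γ e2))
/-- `SubE Γ e t` means `t ∈ subexps(e)`: subexpressions of a Γ-extended
expression, looking through productions at nonterminals. -/
inductive SubE (Γ : Grammar) : ExpE → ExpE → Prop
  | refl (e : ExpE) : SubE Γ e e
  | lam {x : String} {e t : ExpE} : SubE Γ e t → SubE Γ (ExpE.lam x e) t
  | appL {e1 e2 t : ExpE} : SubE Γ e1 t → SubE Γ (ExpE.app e1 e2) t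
  | appR {e1 e2 t : ExpE} : SubE Γ e2 t → SubE Γ (ExpE.app e1 e2) t
  | nt {A : String} {e t : ExpE} :
      (A, e) ∈ Γ.prods → SubE Γ e t → SubE Γ (ExpE.nt A) t
/- The approximate extended semantics with size-change graphs (environments
removed), for a fixed Γ-extended program `P`. -/
inductive CallAXn (Γ : Grammar) : ExpE → ExpE → ArcSet → Prop
  | gram {A : String} {e : ExpE} :
      (A, e) ∈ Γ.prods → CallAXn Γ (ExpE.nt A) e (idEqS (fvE Γ e))

mutual
  inductive EvalAX (Γ : Grammar) (P : ExpE) : ExpE → ExpE → ArcSet → Prop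
    | value (x : String) (e : ExpE) :
        EvalAX Γ P (ExpE.lam x e) (ExpE.lam x e) (idEqS (fvE Γ (ExpE.lam x e)))
    | var {e1 e2 : ExpE} {x : String} {e0 v2 : ExpE} {G1 G2 : ArcSet} :
        SubE Γ P (ExpE.app e1 e2) →
        EvalAX Γ P e1 (ExpE.lam x e0) G1 → EvalAX Γ P e2 v2 G2 →
        EvalAX Γ P (ExpE.var x) v2 (varGraphS x (fvE Γ v2))
    | resultC {a e' v : ExpE} {G' G : ArcSet} :
        CallAXc Γ P a e' G' → EvalAX Γ P e' v G → EvalAX Γ P a v (compA G' G)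
    | resultN {a e' v : ExpE} {G' G : ArcSet} :
        CallAXn Γ a e' G' → EvalAX Γ P e' v G → EvalAX Γ P a v (compA G' G)
  inductive CallAXc (Γ : Grammar) (P : ExpE) : ExpE → ExpE → ArcSet → Prop
    | call {e1 e2 : ExpE} {x : String} {e0 v2 : ExpE} {G1 G2 : ArcSet} :
        EvalAX Γ P e1 (ExpE.lam x e0) G1 → EvalAX Γ P e2 v2 G2 →
        CallAXc Γ P (ExpE.app e1 e2) e0
          (unionRS (fvE Γ e0) (GminusS x (fvE Γ e0) G1) (GepsS x G2))
end

inductive CallAXr (Γ : Grammar) : ExpE → ExpE → ArcSet → Prop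
  | oper (e1 e2 : ExpE) : CallAXr Γ (ExpE.app e1 e2) e1 (idDecS (fvE Γ e1))

inductive CallAXd (Γ : Grammar) : ExpE → ExpE → ArcSet → Prop
  | opnd (e1 e2 : ExpE) : CallAXd Γ (ExpE.app e1 e2) e2 (idDecS (fvE Γ e2))

/-- The approximate extended call relation `→ = →r ∪ →d ∪ →c ∪ →n`. -/
def CallAXAny (Γ : Grammar) (P : ExpE) (e e' : ExpE) (G : ArcSet) : Prop :=
  CallAXr Γ e e' G ∨ CallAXd Γ e e' G ∨ CallAXc Γ P e e' G ∨ CallAXn Γ e e' G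

/-- The extended call relation `→ = →r ∪ →d ∪ →c ∪ →n` (with graphs). -/
def CallXAny (Γ : Grammar) (s s' : StateE) (G : ArcSet) : Prop :=
  CallXr Γ s s' G ∨ CallXd Γ s s' G ∨ CallXc Γ s s' G ∨ CallXn Γ s s' G

/-- The extended call relation, forgetting the graphs. -/
def CallXU (Γ : Grammar) (s s' : StateE) : Prop := ∃ G, CallXAny Γ s s' G

/-!
The invariant behind soundness: in every reachable state `e:ρ`, `e` is a subexpression of `P`,
and every binding `y ↦ v` in `ρ`, as well as in the environments of the closures stored there,
was created by a call at some application `e₁ @ e₂` of `P` at which the approximate semantics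
also evaluates `e₁` to a `λy`-abstraction and `e₂` to `v`. This is exactly the premise of
(VarAG), and every size-change graph depends only on the expressions involved, never on
environments; so each concrete rule is matched by its approximate counterpart with the same graph,
and the invariant is preserved along calls and evaluations.
-/

section

variable {Γ : Grammar} {P : ExpE}

namespace SubE

theorem trans : ∀ {a b c : ExpE}, SubE Γ a b → SubE Γ b c → SubE Γ a c
  | _, _, _, .refl _, h => h
  | _, _, _, .lam h₁, h₂ => .lam (h₁.trans h₂)
  | _, _, _, .appL h₁, h₂ => .appL (h₁.trans h₂)
  | _, _, _, .appR h₁, h₂ => .appR (h₁.trans h₂)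
  | _, _, _, .nt hp h₁, h₂ => .nt hp (h₁.trans h₂)

theorem of_app_left {e e₁ e₂ : ExpE} (h : SubE Γ e (.app e₁ e₂)) : SubE Γ e e₁ :=
  h.trans (.appL (.refl _))

theorem of_app_right {e e₁ e₂ : ExpE} (h : SubE Γ e (.app e₁ e₂)) : SubE Γ e e₂ :=
  h.trans (.appR (.refl _))

theorem of_lam {e e₀ : ExpE} {x : String} (h : SubE Γ e (.lam x e₀)) : SubE Γ e e₀ :=
  h.trans (.lam (.refl _))

theorem of_prod {e e' : ExpE} {A : String} (h : SubE Γ e (.nt A)) (hp : (A, e') ∈ Γ.prods) :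
    SubE Γ e e' :=
  h.trans (.nt hp (.refl _))

end SubE

def JustifiedBinding (Γ : Grammar) (P : ExpE) (x : String) (v : ValE) : Prop :=
  ∃ e₁ e₂ e₀ G₁ G₂, SubE Γ P (.app e₁ e₂) ∧
    EvalAX Γ P e₁ (.lam x e₀) G₁ ∧ EvalAX Γ P e₂ v.toExp G₂

inductive SoundVal (Γ : Grammar) (P : ExpE) : ValE → Prop
  | clos (x : String) (e : ExpE) (ρ : EnvE) :
      SubE Γ P (.lam x e) →
      (∀ y v, ρ y = some v → SoundVal Γ P v) →
      (∀ y v, ρ y = some v → JustifiedBinding Γ P y v) →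
      SoundVal Γ P (.clos x e ρ)

def SoundEnv (Γ : Grammar) (P : ExpE) (ρ : EnvE) : Prop :=
  ∀ y v, ρ y = some v → SoundVal Γ P v ∧ JustifiedBinding Γ P y v

theorem soundEnv_empty : SoundEnv Γ P EnvE.empty := by
  intro y v hy
  cases hy

theorem SoundVal.soundEnv {x : String} {e : ExpE} {ρ : EnvE}
    (h : SoundVal Γ P (.clos x e ρ)) : SoundEnv Γ P ρ := by
  cases h with
  | clos _ _ _ _ hval hjust => exact fun y v hy => ⟨hval y v hy, hjust y v hy⟩

theorem SoundVal.subE_lam {x : String} {e : ExpE} {ρ : EnvE}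
    (h : SoundVal Γ P (.clos x e ρ)) : SubE Γ P (.lam x e) := by
  cases h with
  | clos _ _ _ hsub _ _ => exact hsub

theorem SoundEnv.update {ρ : EnvE} {x : String} {v : ValE} (hρ : SoundEnv Γ P ρ)
    (hv : SoundVal Γ P v) (hx : JustifiedBinding Γ P x v) :
    SoundEnv Γ P (ρ.update x v) := by
  intro y w hy
  by_cases hyx : y = x
  · subst hyx
    obtain rfl : v = w := by simpa [EnvE.update] using hy
    exact ⟨hv, hx⟩
  · simp only [EnvE.update, if_neg hyx] at hy
    exact hρ y w hy

mutual

theorem EvalX.approx {s : StateE} {v : ValE} {G : ArcSet} :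
    EvalX Γ s v G → SubE Γ P s.1 → SoundEnv Γ P s.2 →
      EvalAX Γ P s.1 v.toExp G ∧ SoundVal Γ P v
  | .value x e ρ, hsub, hρ =>
    ⟨.value x e, .clos x e ρ hsub (fun y w hy => (hρ y w hy).1) (fun y w hy => (hρ y w hy).2)⟩
  | .var hx, _, hρ =>
    have ⟨hv, _, _, _, _, _, happ, h₁, h₂⟩ := hρ _ _ hx
    ⟨.var happ h₁ h₂, hv⟩
  | .resultC hc he, hsub, hρ =>
    have ⟨hc', hsub', hρ'⟩ := hc.approx hsub hρ
    have ⟨he', hv⟩ := he.approx hsub' hρ'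
    ⟨.resultC hc' he', hv⟩
  | .resultN (.gram _ hp) he, hsub, hρ =>
    have ⟨he', hv⟩ := he.approx (hsub.of_prod hp) hρ
    ⟨.resultN (.gram hp) he', hv⟩

theorem CallXc.approx {s s' : StateE} {G : ArcSet} :
    CallXc Γ s s' G → SubE Γ P s.1 → SoundEnv Γ P s.2 →
      CallAXc Γ P s.1 s'.1 G ∧ SubE Γ P s'.1 ∧ SoundEnv Γ P s'.2
  | .call h₁ h₂, hsub, hρ =>
    have ⟨h₁', hclos⟩ := h₁.approx hsub.of_app_left hρ
    have ⟨h₂', hv₂⟩ := h₂.approx hsub.of_app_right hρ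
    ⟨.call h₁' h₂', hclos.subE_lam.of_lam,
      hclos.soundEnv.update hv₂ ⟨_, _, _, _, _, hsub, h₁', h₂'⟩⟩

end

theorem CallXAny.approx {s s' : StateE} {G : ArcSet} (h : CallXAny Γ s s' G)
    (hsub : SubE Γ P s.1) (hρ : SoundEnv Γ P s.2) :
    CallAXAny Γ P s.1 s'.1 G ∧ SubE Γ P s'.1 ∧ SoundEnv Γ P s'.2 := by
  rcases h with (⟨e₁, e₂, _⟩ | ⟨e₂, _⟩ | hc | ⟨_, hp⟩)
  · exact ⟨.inl (.oper e₁ e₂), hsub.of_app_left, hρ⟩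
  · exact ⟨.inr (.inl (.opnd _ e₂)), hsub.of_app_right, hρ⟩
  · obtain ⟨hc', hsub', hρ'⟩ := hc.approx hsub hρ
    exact ⟨.inr (.inr (.inl hc')), hsub', hρ'⟩
  · exact ⟨.inr (.inr (.inr (.gram hp))), hsub.of_prod hp, hρ⟩

theorem sound_of_reachable {s : StateE}
    (h : Relation.ReflTransGen (CallXU Γ) (P, EnvE.empty) s) :
    SubE Γ P s.1 ∧ SoundEnv Γ P s.2 := by
  induction h with
  | refl => exact ⟨.refl P, soundEnv_empty⟩
  | tail _ hstep ih =>
    obtain ⟨G, hstep⟩ := hstep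
    exact (hstep.approx ih.1 ih.2).2

end

/-- Soundness of the approximate extended semantics: for a Γ-extended program
`P`, every call or evaluation (with its size-change graph) from a state
reachable from `P:[]` is matched, with the same graph, by the approximate
extended semantics. -/
theorem approx_extended_sound (Γ : Grammar) (P : ExpE) (hP : fvE Γ P = ∅) :
    ∀ (e : ExpE) (ρ : EnvE),
      Relation.ReflTransGen (CallXU Γ) (P, EnvE.empty) (e, ρ) →
      (∀ (e0 : ExpE) (ρ0 : EnvE) (G : ArcSet),
        CallXAny Γ (e, ρ) (e0, ρ0) G → CallAXAny Γ P e e0 G) ∧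
      (∀ (v : ValE) (G : ArcSet),
        EvalX Γ (e, ρ) v G → EvalAX Γ P e v.toExp G) := by
  intro e ρ hreach
  obtain ⟨hsub, hρ⟩ := sound_of_reachable hreach
  exact ⟨fun _ _ _ hcall => (hcall.approx hsub hρ).1, fun _ _ hev => (hev.approx hsub hρ).1⟩
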